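/- arXiv:2309.12771 — 6 statements merged into one kernel-verified Lean document; each statement's English description precedes it below -/
import Mathlib

section
/- For all real numbers p, q with 0 < p < 1, 0 < q < 1 and p + q < 1, one has 9·P₃(p,q) + 16·P₄(p,q) + 25·P₅(p,q) + 36·P₆(p,q) − 16 = 4pq(1−p−q)/((1−p)(1−q)(p+q)); that is, the variance of the vertex number of the typical cell equals 4pq(1−p−q)/((1−p)(1−q)(p+q)). -/
noncomputable section

def β (p q : ℝ) : ℝ := (1 - p) * (1 - q) * (p + q) * (p + q - p^2 - q^2 - p*q)

def P₃ (p q : ℝ) : ℝ := (β p q)⁻¹ * (2*p*q*(1-p)*(1-q)*(p+q)*(1-p-q))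

def P₄ (p q : ℝ) : ℝ := (β p q)⁻¹ *
  (6*p^2*q^2*(p+q)^2 + 2*p*q*(12*p*q+1) - 22*p^2*q^2*(p+q)
    - p^2*(5*p^2*q - 12*p*q + 2*p + 9*q - p^2 - 1)
    - q^2*(5*p*q^2 - 12*p*q + 2*q + 9*p - q^2 - 1))

def P₅ (p q : ℝ) : ℝ := (β p q)⁻¹ *
  (6*p^2*q^2*(p+q)*(1-p-q) - 2*p*q*(1-p-q)*(p^2+q^2)
    + 2*p*q*(p+q)*(1-p-q) - 8*p^2*q^2*(1-p-q))

def P₆ (p q : ℝ) : ℝ := (β p q)⁻¹ * (2*p^2*q^2*(1-p-q)^2)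

end

theorem stmt_3 (p q : ℝ) (hp0 : 0 < p) (hp1 : p < 1) (hq0 : 0 < q) (hq1 : q < 1)
    (hpq : p + q < 1) :
    9 * P₃ p q + 16 * P₄ p q + 25 * P₅ p q + 36 * P₆ p q - 16
      = 4*p*q*(1-p-q) / ((1-p)*(1-q)*(p+q)) := by
  have h1 : (0:ℝ) < 1 - p := by linarith
  have h2 : (0:ℝ) < 1 - q := by linarith
  have h3 : (0:ℝ) < p + q := by linarith
  have h4 : (0:ℝ) < p + q - p^2 - q^2 - p*q := by nlinarith [mul_pos h3 (show (0:ℝ) < 1-p-q by linarith), mul_pos hp0 hq0]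
  have hβ : β p q ≠ 0 := by
    unfold β; positivity
  unfold P₃ P₄ P₅ P₆ at *
  unfold β at *
  field_simp
  ring
end

section
/- For all real numbers p, q with 0 < p < 1, 0 < q < 1 and p + q < 1, one has 4pq(1−p−q)/((1−p)(1−q)(p+q)) ≤ 1/2, with equality if and only if p = q = 1/3. -/
theorem stmt_4 (p q : ℝ) (hp0 : 0 < p) (hp1 : p < 1) (hq0 : 0 < q) (hq1 : q < 1)
    (hpq : p + q < 1) :
    4*p*q*(1-p-q) / ((1-p)*(1-q)*(p+q)) ≤ 1/2 ∧
    (4*p*q*(1-p-q) / ((1-p)*(1-q)*(p+q)) = 1/2 ↔ p = 1/3 ∧ q = 1/3) := by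
  have hr : 0 < 1 - p - q := by linarith
  have hd : 0 < (1-p)*(1-q)*(p+q) := by
    apply mul_pos (mul_pos (by linarith) (by linarith)) (by linarith)
  constructor
  · rw [div_le_div_iff₀ hd (by norm_num : (0:ℝ) < 2)] at *
    nlinarith [mul_nonneg hp0.le (sq_nonneg (q - (1-p-q))),
      mul_nonneg hq0.le (sq_nonneg (p - (1-p-q))),
      mul_nonneg hr.le (sq_nonneg (p - q))]
  · constructor
    · intro h
      rw [div_eq_div_iff hd.ne' (by norm_num : (2:ℝ) ≠ 0)] at h
      have h1 : p*(q - (1-p-q))^2 + q*(p - (1-p-q))^2 + (1-p-q)*(p-q)^2 = 0 := by ring_nf; ring_nf at h; linarith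
      have e1 : p*(q - (1-p-q))^2 = 0 := by
        nlinarith [mul_nonneg hp0.le (sq_nonneg (q - (1-p-q))),
          mul_nonneg hq0.le (sq_nonneg (p - (1-p-q))),
          mul_nonneg hr.le (sq_nonneg (p - q))]
      have e2 : q*(p - (1-p-q))^2 = 0 := by
        nlinarith [mul_nonneg hp0.le (sq_nonneg (q - (1-p-q))),
          mul_nonneg hq0.le (sq_nonneg (p - (1-p-q))),
          mul_nonneg hr.le (sq_nonneg (p - q))]
      have s1 : q - (1-p-q) = 0 := by
        have := (mul_eq_zero.mp e1).resolve_left hp0.ne'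
        exact pow_eq_zero_iff (by norm_num) |>.mp this
      have s2 : p - (1-p-q) = 0 := by
        have := (mul_eq_zero.mp e2).resolve_left hq0.ne'
        exact pow_eq_zero_iff (by norm_num) |>.mp this
      constructor <;> linarith
    · rintro ⟨rfl, rfl⟩
      norm_num
end

section
/- For all real numbers p, q with 0 < p < 1, 0 < q < 1 and p + q < 1, one has P₃(p,q) ≤ 2/9, with equality if and only if p = q = 1/3. In particular the maximum of P₃ over the admissible parameter region equals 2/9 and is attained precisely at p = q = 1/3. -/
lemma beta_pos (p q : ℝ) (hp0 : 0 < p) (hp1 : p < 1) (hq0 : 0 < q) (hq1 : q < 1)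
    (hpq : p + q < 1) : 0 < β p q := by
  have h1p : 0 < 1 - p := by linarith
  have h1q : 0 < 1 - q := by linarith
  have hs : 0 < p + q := by linarith
  have hr : 0 < 1 - p - q := by linarith
  have hD : 0 < p + q - p^2 - q^2 - p*q := by nlinarith [mul_pos hp0 hq0, mul_pos hs hr]
  unfold β
  positivity

lemma key (p q : ℝ) (hp0 : 0 < p) (hp1 : p < 1) (hq0 : 0 < q) (hq1 : q < 1)
    (hpq : p + q < 1) :
    P₃ p q ≤ 2/9 ∧ (P₃ p q = 2/9 ↔ p = 1/3 ∧ q = 1/3) := by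
  have h1p : 0 < 1 - p := by linarith
  have h1q : 0 < 1 - q := by linarith
  have hs : 0 < p + q := by linarith
  have hr : 0 < 1 - p - q := by linarith
  have hβ : 0 < β p q := beta_pos p q hp0 hp1 hq0 hq1 hpq
  have hA : 0 < (1 - p) * (1 - q) * (p + q) := by positivity
  set r := 1 - p - q with hrdef
  -- key identity: 2 * β p q - 9 * N = 2 * A * (p*(q-r)^2 + q*(r-p)^2 + r*(p-q)^2)
  have hid : 2 * β p q - 9 * (2*p*q*(1-p)*(1-q)*(p+q)*(1-p-q))
      = 2 * ((1 - p) * (1 - q) * (p + q)) *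
        (p*(q-r)^2 + q*(r-p)^2 + r*(p-q)^2) := by
    unfold β; rw [hrdef]; ring
  have t1 : 0 ≤ p*(q-r)^2 := by positivity
  have t2 : 0 ≤ q*(r-p)^2 := by positivity
  have t3 : 0 ≤ r*(p-q)^2 := by positivity
  have hsum : 0 ≤ p*(q-r)^2 + q*(r-p)^2 + r*(p-q)^2 := by linarith
  have hle : P₃ p q ≤ 2/9 := by
    unfold P₃
    rw [inv_mul_le_iff₀ hβ]
    nlinarith [mul_nonneg hA.le hsum]
  refine ⟨hle, ?_, ?_⟩
  · intro heq
    have h9 : 9 * (2*p*q*(1-p)*(1-q)*(p+q)*(1-p-q)) = 2 * β p q := by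
      have := heq
      unfold P₃ at this
      field_simp at this
      linarith [this]
    have hzero : p*(q-r)^2 + q*(r-p)^2 + r*(p-q)^2 = 0 := by
      have h2 : 2 * ((1 - p) * (1 - q) * (p + q)) *
          (p*(q-r)^2 + q*(r-p)^2 + r*(p-q)^2) = 0 := by linarith [hid]
      have h3 : 2 * ((1 - p) * (1 - q) * (p + q)) ≠ 0 := by positivity
      exact (mul_eq_zero.mp h2).resolve_left h3
    have e1 : p*(q-r)^2 = 0 := le_antisymm (by linarith) t1
    have e2 : q*(r-p)^2 = 0 := le_antisymm (by linarith) t2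
    have hqr : q = r := by
      have := (mul_eq_zero.mp e1).resolve_left (ne_of_gt hp0)
      have := pow_eq_zero_iff (n := 2) (by norm_num) |>.mp this
      linarith
    have hrp : r = p := by
      have := (mul_eq_zero.mp e2).resolve_left (ne_of_gt hq0)
      have := pow_eq_zero_iff (n := 2) (by norm_num) |>.mp this
      linarith
    rw [hrdef] at hqr hrp
    exact ⟨by linarith, by linarith⟩
  · rintro ⟨rfl, rfl⟩
    norm_num [P₃, β]

theorem stmt_5 (p q : ℝ) (hp0 : 0 < p) (hp1 : p < 1) (hq0 : 0 < q) (hq1 : q < 1)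
    (hpq : p + q < 1) :
    (P₃ p q ≤ 2/9 ∧ (P₃ p q = 2/9 ↔ p = 1/3 ∧ q = 1/3)) ∧
    IsGreatest {x : ℝ | ∃ p' q' : ℝ, 0 < p' ∧ p' < 1 ∧ 0 < q' ∧ q' < 1 ∧ p' + q' < 1 ∧
      x = P₃ p' q'} (2/9) := by
  refine ⟨key p q hp0 hp1 hq0 hq1 hpq, ⟨⟨1/3, 1/3, by norm_num, by norm_num, by norm_num,
    by norm_num, by norm_num, by norm_num [P₃, β]⟩, ?_⟩⟩
  rintro x ⟨p', q', h1, h2, h3, h4, h5, rfl⟩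
  exact (key p' q' h1 h2 h3 h4 h5).1
end

section
/- For all real numbers p, q with 0 < p < 1, 0 < q < 1 and p + q < 1, one has P₄(p,q) ≥ 7/12, with equality if and only if p = q = 1/3. In particular the minimum of P₄ over the admissible parameter region equals 7/12 and is attained precisely at p = q = 1/3. -/
/-- Abstract form of the quadratic-in-`T` argument. -/
lemma quadT (S T c d : ℝ) (hT : 27*T^2 ≤ 4*S^3)
    (hc : 32/3 ≤ c) (hd : 0 ≤ d)
    (hPhi : 0 ≤ (72*(4*S^3/27) + d)^2 - c^2*(4*S^3/27))
    (hphi : 0 ≤ c^2 - 144*d - 1536*S^3) :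
    0 ≤ 72*T^2 + c*T + d := by
  rcases le_or_gt 0 T with hT0 | hT0
  · have h1 : 0 ≤ c*T := mul_nonneg (by linarith) hT0
    nlinarith [sq_nonneg T]
  · have hA : 0 < 72*T^2 - c*T + d := by
      have h1 : 0 < c * (-T) := mul_pos (by linarith) (by linarith)
      nlinarith [sq_nonneg T]
    have hRY : 0 ≤ 4*S^3/27 - T^2 := by linarith
    have h2 : 0 ≤ (4*S^3/27 - T^2) * ((c^2 - 144*d - 1536*S^3) + 5184*(4*S^3/27 - T^2)) :=
      mul_nonneg hRY (by linarith)
    have hTheta : 0 ≤ (72*T^2 + d)^2 - c^2*T^2 := by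
      have hid : (72*T^2 + d)^2 - c^2*T^2
          = ((72*(4*S^3/27) + d)^2 - c^2*(4*S^3/27))
            + (4*S^3/27 - T^2) * ((c^2 - 144*d - 1536*S^3) + 5184*(4*S^3/27 - T^2)) := by
        ring
      rw [hid]; linarith
    have hprod : (72*T^2 + c*T + d) * (72*T^2 - c*T + d) = (72*T^2 + d)^2 - c^2*T^2 := by
      ring
    nlinarith [hprod, hTheta, hA]

/-- Key inequality in the discriminant variables. -/
lemma key_ST (S T : ℝ) (hS0 : 0 ≤ S) (hS1 : S ≤ 1/3) (hT : 27*T^2 ≤ 4*S^3) :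
    10*S*(1/3 - S)^2 ≤ 72*T^2 + (37/3 - 5*S)*T + S*(74/27 - 14/3*S) := by
  have hc : 32/3 ≤ 37/3 - 5*S := by linarith
  have hd : 0 ≤ S*(74/27 - 14/3*S) - 10*S*(1/3 - S)^2 := by
    have h1 : S*(74/27 - 14/3*S) - 10*S*(1/3 - S)^2 = S*(44/27 + 2*S - 10*S^2) := by ring
    rw [h1]
    exact mul_nonneg hS0 (by nlinarith [sq_nonneg S])
  have hPhi : 0 ≤ (72*(4*S^3/27) + (S*(74/27 - 14/3*S) - 10*S*(1/3 - S)^2))^2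
      - (37/3 - 5*S)^2*(4*S^3/27) := by
    have h1 : (72*(4*S^3/27) + (S*(74/27 - 14/3*S) - 10*S*(1/3 - S)^2))^2
        - (37/3 - 5*S)^2*(4*S^3/27)
        = (4/729*S^2)*((1-3*S)^2)*(9*S^2-15*S+484) := by ring
    rw [h1]
    have h2 : (0:ℝ) < 9*S^2-15*S+484 := by nlinarith [sq_nonneg (6*S-5)]
    have h3 : (0:ℝ) ≤ 4/729*S^2 := by positivity
    exact mul_nonneg (mul_nonneg h3 (sq_nonneg _)) h2.le
  have hphi : 0 ≤ (37/3 - 5*S)^2 - 144*(S*(74/27 - 14/3*S) - 10*S*(1/3 - S)^2)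
      - 1536*S^3 := by
    have h1 : (37/3 - 5*S)^2 - 144*(S*(74/27 - 14/3*S) - 10*S*(1/3 - S)^2) - 1536*S^3
        = (1 - 3*S)*(32*S^2 + 295/3*S + 1369/9) := by ring
    rw [h1]
    exact mul_nonneg (by linarith) (by nlinarith [sq_nonneg S])
  have := quadT S T (37/3 - 5*S) (S*(74/27 - 14/3*S) - 10*S*(1/3 - S)^2)
    hT hc hd hPhi hphi
  linarith

/-- The central polynomial inequality in p, q. -/
lemma key_pq (p q : ℝ) (hp0 : 0 < p) (hq0 : 0 < q) (hpq : p + q < 1) :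
    10*((p-1/3)^2 + (p-1/3)*(q-1/3) + (q-1/3)^2)
      * (1/3 - ((p-1/3)^2 + (p-1/3)*(q-1/3) + (q-1/3)^2))^2
    ≤ 12*(6*p^2*q^2*(p+q)^2 + 2*p*q*(12*p*q+1) - 22*p^2*q^2*(p+q)
        - p^2*(5*p^2*q - 12*p*q + 2*p + 9*q - p^2 - 1)
        - q^2*(5*p*q^2 - 12*p*q + 2*q + 9*p - q^2 - 1)) - 7*(β p q) := by
  have hS0 : 0 ≤ (p-1/3)^2 + (p-1/3)*(q-1/3) + (q-1/3)^2 := by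
    nlinarith [sq_nonneg (2*(p-1/3)+(q-1/3)), sq_nonneg (q-1/3)]
  have hS1 : (p-1/3)^2 + (p-1/3)*(q-1/3) + (q-1/3)^2 ≤ 1/3 := by
    nlinarith [mul_pos hp0 (by linarith : (0:ℝ) < 1-p-q),
      mul_pos hq0 (by linarith : (0:ℝ) < 1-q)]
  have hT : 27*((p-1/3)*(q-1/3)*((p-1/3)+(q-1/3)))^2
      ≤ 4*((p-1/3)^2 + (p-1/3)*(q-1/3) + (q-1/3)^2)^3 := by
    have h1 : 4*((p-1/3)^2 + (p-1/3)*(q-1/3) + (q-1/3)^2)^3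
        - 27*((p-1/3)*(q-1/3)*((p-1/3)+(q-1/3)))^2
        = ((p-q)*(2*(p-1/3)+(q-1/3))*((p-1/3)+2*(q-1/3)))^2 := by ring
    nlinarith [sq_nonneg ((p-q)*(2*(p-1/3)+(q-1/3))*((p-1/3)+2*(q-1/3))), h1]
  have hkey := key_ST ((p-1/3)^2 + (p-1/3)*(q-1/3) + (q-1/3)^2)
    ((p-1/3)*(q-1/3)*((p-1/3)+(q-1/3))) hS0 hS1 hT
  have hid : 12*(6*p^2*q^2*(p+q)^2 + 2*p*q*(12*p*q+1) - 22*p^2*q^2*(p+q)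
        - p^2*(5*p^2*q - 12*p*q + 2*p + 9*q - p^2 - 1)
        - q^2*(5*p*q^2 - 12*p*q + 2*q + 9*p - q^2 - 1)) - 7*(β p q)
      = 72*((p-1/3)*(q-1/3)*((p-1/3)+(q-1/3)))^2
        + (37/3 - 5*((p-1/3)^2 + (p-1/3)*(q-1/3) + (q-1/3)^2))
            *((p-1/3)*(q-1/3)*((p-1/3)+(q-1/3)))
        + ((p-1/3)^2 + (p-1/3)*(q-1/3) + (q-1/3)^2)
            *(74/27 - 14/3*((p-1/3)^2 + (p-1/3)*(q-1/3) + (q-1/3)^2)) := by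
    rw [β]; ring
  linarith [hkey, hid.ge, hid.le]

lemma P4_ge (p q : ℝ) (hp0 : 0 < p) (hp1 : p < 1) (hq0 : 0 < q) (hq1 : q < 1)
    (hpq : p + q < 1) : 7/12 ≤ P₄ p q := by
  have hβ := beta_pos p q hp0 hp1 hq0 hq1 hpq
  have hkey := key_pq p q hp0 hq0 hpq
  have hS0 : 0 ≤ ((p-1/3)^2 + (p-1/3)*(q-1/3) + (q-1/3)^2) := by
    nlinarith [sq_nonneg (2*(p-1/3)+(q-1/3)), sq_nonneg (q-1/3)]
  have hLHS : 0 ≤ 10*((p-1/3)^2 + (p-1/3)*(q-1/3) + (q-1/3)^2)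
      * (1/3 - ((p-1/3)^2 + (p-1/3)*(q-1/3) + (q-1/3)^2))^2 := by
    have := mul_nonneg (by linarith : 0 ≤ 10*((p-1/3)^2 + (p-1/3)*(q-1/3) + (q-1/3)^2))
      (sq_nonneg (1/3 - ((p-1/3)^2 + (p-1/3)*(q-1/3) + (q-1/3)^2)))
    linarith [this]
  rw [P₄, inv_mul_eq_div, le_div_iff₀ hβ]
  linarith

set_option maxHeartbeats 2000000 in
theorem stmt_6 (p q : ℝ) (hp0 : 0 < p) (hp1 : p < 1) (hq0 : 0 < q) (hq1 : q < 1)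
    (hpq : p + q < 1) :
    (7/12 ≤ P₄ p q ∧ (P₄ p q = 7/12 ↔ p = 1/3 ∧ q = 1/3)) ∧
    IsLeast {x : ℝ | ∃ p' q' : ℝ, 0 < p' ∧ p' < 1 ∧ 0 < q' ∧ q' < 1 ∧ p' + q' < 1 ∧
      x = P₄ p' q'} (7/12) := by
  have hval : P₄ (1/3) (1/3) = 7/12 := by
    rw [P₄, β]; norm_num
  refine ⟨⟨P4_ge p q hp0 hp1 hq0 hq1 hpq, ?_, ?_⟩, ?_, ?_⟩
  · intro heq
    have hβ := beta_pos p q hp0 hp1 hq0 hq1 hpq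
    have hkey := key_pq p q hp0 hq0 hpq
    have hS0 : 0 ≤ (p-1/3)^2 + (p-1/3)*(q-1/3) + (q-1/3)^2 := by
      nlinarith [sq_nonneg (2*(p-1/3)+(q-1/3)), sq_nonneg (q-1/3)]
    have hS1 : (p-1/3)^2 + (p-1/3)*(q-1/3) + (q-1/3)^2 < 1/3 := by
      nlinarith [mul_pos hp0 (by linarith : (0:ℝ) < 1-p-q),
        mul_pos hq0 (by linarith : (0:ℝ) < 1-q)]
    have hNeq : 12*(6*p^2*q^2*(p+q)^2 + 2*p*q*(12*p*q+1) - 22*p^2*q^2*(p+q)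
        - p^2*(5*p^2*q - 12*p*q + 2*p + 9*q - p^2 - 1)
        - q^2*(5*p*q^2 - 12*p*q + 2*q + 9*p - q^2 - 1)) - 7*(β p q) = 0 := by
      rw [P₄, inv_mul_eq_div] at heq
      have := (div_eq_iff (ne_of_gt hβ)).mp heq
      linarith
    have hS00 : 10*((p-1/3)^2 + (p-1/3)*(q-1/3) + (q-1/3)^2)
        * (1/3 - ((p-1/3)^2 + (p-1/3)*(q-1/3) + (q-1/3)^2))^2 ≤ 0 := by
      linarith
    have hSz : (p-1/3)^2 + (p-1/3)*(q-1/3) + (q-1/3)^2 = 0 := by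
      rcases eq_or_lt_of_le hS0 with h | h
      · exact h.symm
      · exfalso
        have h2 : (0:ℝ) < (1/3 - ((p-1/3)^2 + (p-1/3)*(q-1/3) + (q-1/3)^2))^2 := by
          have : (0:ℝ) < 1/3 - ((p-1/3)^2 + (p-1/3)*(q-1/3) + (q-1/3)^2) := by linarith
          positivity
        nlinarith [mul_pos (by linarith : (0:ℝ) < 10*((p-1/3)^2 + (p-1/3)*(q-1/3) + (q-1/3)^2)) h2]
    have hv : q - 1/3 = 0 := by
      nlinarith [sq_nonneg (2*(p-1/3)+(q-1/3)), sq_nonneg (q-1/3)]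
    have hu : p - 1/3 = 0 := by
      nlinarith [sq_nonneg (2*(p-1/3)+(q-1/3)), sq_nonneg (q-1/3)]
    exact ⟨by linarith, by linarith⟩
  · rintro ⟨hp, hq⟩
    rw [hp, hq, hval]
  · exact ⟨1/3, 1/3, by norm_num, by norm_num, by norm_num, by norm_num, by norm_num,
      hval.symm⟩
  · rintro x ⟨p', q', h1, h2, h3, h4, h5, rfl⟩
    exact P4_ge p' q' h1 h2 h3 h4 h5
end

section
/- For all real numbers p, q with 0 < p < 1, 0 < q < 1 and p + q < 1, one has P₆(p,q) ≤ 1/36, with equality if and only if p = q = 1/3. In particular the maximum of P₆ over the admissible parameter region equals 1/36 and is attained precisely at p = q = 1/3. -/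
lemma key_ineq (p q : ℝ) (hp0 : 0 < p) (hq0 : 0 < q) (hr : 0 < 1 - p - q) :
    p*q*(1-p-q)*((p-q)^2+(3*p+3*q-2)^2) ≤
      (1 - p) * (1 - q) * (p + q) * (p + q - p^2 - q^2 - p*q)
        - 36*(2*p^2*q^2*(1-p-q)^2) := by
  nlinarith [sq_nonneg (p-q), sq_nonneg (3*p+3*q-2), mul_pos hp0 hq0,
    mul_pos (mul_pos hp0 hq0) hr, sq_nonneg (p+q), sq_nonneg (p*q),
    mul_nonneg (mul_nonneg hp0.le hq0.le) (sq_nonneg (p-q)),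
    mul_nonneg (mul_nonneg hp0.le hq0.le) (sq_nonneg (3*p+3*q-2)),
    mul_nonneg (mul_nonneg (mul_nonneg hp0.le hq0.le) hr.le) (sq_nonneg (p-q)),
    mul_nonneg (mul_nonneg (mul_nonneg hp0.le hq0.le) hr.le) (sq_nonneg (3*p+3*q-2)),
    sq_nonneg (p+q-2/3), mul_pos hp0 hr, mul_pos hq0 hr]

lemma P6_le (p q : ℝ) (hp0 : 0 < p) (hp1 : p < 1) (hq0 : 0 < q) (hq1 : q < 1)
    (hpq : p + q < 1) : P₆ p q ≤ 1/36 := by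
  have hb := beta_pos p q hp0 hp1 hq0 hq1 hpq
  have hr : (0:ℝ) < 1 - p - q := by linarith
  have hk := key_ineq p q hp0 hq0 hr
  have hnn : 0 ≤ p*q*(1-p-q)*((p-q)^2+(3*p+3*q-2)^2) := by positivity
  rw [P₆, inv_mul_le_iff₀ hb]
  unfold β at hb ⊢
  linarith

theorem stmt_8 (p q : ℝ) (hp0 : 0 < p) (hp1 : p < 1) (hq0 : 0 < q) (hq1 : q < 1)
    (hpq : p + q < 1) :
    (P₆ p q ≤ 1/36 ∧ (P₆ p q = 1/36 ↔ p = 1/3 ∧ q = 1/3)) ∧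
    IsGreatest {x : ℝ | ∃ p' q' : ℝ, 0 < p' ∧ p' < 1 ∧ 0 < q' ∧ q' < 1 ∧ p' + q' < 1 ∧
      x = P₆ p' q'} (1/36) := by
  have hb := beta_pos p q hp0 hp1 hq0 hq1 hpq
  have hval : P₆ (1/3) (1/3) = 1/36 := by
    unfold P₆ β; norm_num
  refine ⟨⟨P6_le p q hp0 hp1 hq0 hq1 hpq, ?_, ?_⟩, ?_, ?_⟩
  · intro h
    have hr : (0:ℝ) < 1 - p - q := by linarith
    have hk := key_ineq p q hp0 hq0 hr
    rw [P₆, inv_mul_eq_iff_eq_mul₀ hb.ne'] at h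
    have hz : p*q*(1-p-q)*((p-q)^2+(3*p+3*q-2)^2) ≤ 0 := by
      unfold β at h; linarith
    have hpos : 0 < p*q*(1-p-q) := by positivity
    have hsq : (p-q)^2+(3*p+3*q-2)^2 ≤ 0 := by
      by_contra hc
      push_neg at hc
      nlinarith [mul_pos hpos hc]
    have e1 : (p-q)^2 = 0 := by nlinarith [sq_nonneg (p-q), sq_nonneg (3*p+3*q-2)]
    have e2 : (3*p+3*q-2)^2 = 0 := by nlinarith [sq_nonneg (p-q), sq_nonneg (3*p+3*q-2)]
    have h1 : p - q = 0 := by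
      have := pow_eq_zero_iff (n := 2) (by norm_num) |>.mp e1; linarith
    have h2 : 3*p+3*q-2 = 0 := by
      have := pow_eq_zero_iff (n := 2) (by norm_num) |>.mp e2; linarith
    constructor <;> linarith
  · rintro ⟨rfl, rfl⟩
    exact hval
  · exact ⟨1/3, 1/3, by norm_num, by norm_num, by norm_num, by norm_num, by norm_num,
      hval.symm⟩
  · rintro x ⟨p', q', h1, h2, h3, h4, h5, rfl⟩
    exact P6_le p' q' h1 h2 h3 h4 h5
end

section
/- Let 0 < p < 1, 0 < q < 1 with p + q < 1 and set λ := √3·(p + q − p² − q² − pq). Then (3√3·p²·q·(1−p−q)/(4λ)) · ∫₀^∞ ∫_{z₁}^∞ exp( −(√3/2)·( p(z₁ − z₂) + z₂ ) ) dz₂ dz₁ = p²q(1−p−q) / ((1−p)(p+q−p²−q²−pq)). -/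
open MeasureTheory Set Real

lemma integral_Ioi_exp_neg_mul_affine {c p : ℝ} (hc : 0 < c) (hp : p < 1) (z₁ : ℝ) :
    ∫ z₂ in Ioi z₁, exp (-c * (p * (z₁ - z₂) + z₂)) = exp (-(c * z₁)) / (c * (1 - p)) := by
  have hrate : -(c * (1 - p)) < 0 := neg_neg_of_pos (mul_pos hc (sub_pos.mpr hp))
  have hsplit : ∀ z₂ : ℝ, exp (-c * (p * (z₁ - z₂) + z₂)) =
      exp (-(c * p * z₁)) * exp (-(c * (1 - p)) * z₂) := fun z₂ => by
    rw [← exp_add]; ring_nf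
  simp_rw [hsplit, integral_const_mul, integral_exp_mul_Ioi hrate, neg_div_neg_eq, mul_div_assoc',
    ← exp_add]
  ring_nf

lemma integral_Ioi_integral_Ioi_exp_neg_mul_affine {c p : ℝ} (hc : 0 < c) (hp : p < 1) :
    ∫ z₁ in Ioi (0 : ℝ), ∫ z₂ in Ioi z₁, exp (-c * (p * (z₁ - z₂) + z₂))
      = 1 / (c ^ 2 * (1 - p)) := by
  simp_rw [integral_Ioi_exp_neg_mul_affine hc hp, integral_div, neg_mul_eq_neg_mul,
    integral_exp_mul_Ioi (neg_neg_of_pos hc), mul_zero, exp_zero]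
  field_simp

theorem stmt_15_general (p q : ℝ) (hp1 : p < 1)
    (lam : ℝ) (hlam : lam = Real.sqrt 3 * (p + q - p^2 - q^2 - p*q)) :
    (3 * Real.sqrt 3 * p^2 * q * (1 - p - q) / (4 * lam)) *
      (∫ z₁ in Ioi (0:ℝ), ∫ z₂ in Ioi z₁,
        Real.exp (-(Real.sqrt 3 / 2) * (p * (z₁ - z₂) + z₂)))
      = p^2 * q * (1 - p - q) / ((1 - p) * (p + q - p^2 - q^2 - p*q)) := by
  have hsq : (√3 / 2) ^ 2 = 3 / 4 := by rw [div_pow, sq_sqrt (by norm_num)]; norm_num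
  rw [integral_Ioi_integral_Ioi_exp_neg_mul_affine (by positivity) hp1, hsq, hlam]
  field_simp

theorem stmt_15 (p q : ℝ) (hp0 : 0 < p) (hp1 : p < 1) (hq0 : 0 < q) (hq1 : q < 1)
    (hpq : p + q < 1) (lam : ℝ) (hlam : lam = Real.sqrt 3 * (p + q - p^2 - q^2 - p*q)) :
    (3 * Real.sqrt 3 * p^2 * q * (1 - p - q) / (4 * lam)) *
      (∫ z₁ in Ioi (0:ℝ), ∫ z₂ in Ioi z₁,
        Real.exp (-(Real.sqrt 3 / 2) * (p * (z₁ - z₂) + z₂)))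
      = p^2 * q * (1 - p - q) / ((1 - p) * (p + q - p^2 - q^2 - p*q)) :=
  stmt_15_general p q hp1 lam hlam
end
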